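/- For all n, m ≥ 1, the identity mapping from ℝⁿ × ℝᵐ with the product (Euclidean) topology to ℝⁿ × ℝᵐ with the cross-topology is not the pointwise limit of any sequence of continuous mappings from ℝⁿ × ℝᵐ (Euclidean) to (ℝⁿ × ℝᵐ, γ). -/

import Mathlib

/-!
By Baire's theorem, for some `K` the closed set of points `p` with `f k p` on the cross of `p` for
all `k ≥ K` contains a ball. Along a diagonal segment `σ` in that ball, `φ = f k ∘ σ` is a
cross-continuous path lying on the crosses of `σ`. Coincidences `φ t = σ t` are isolated, and
between two consecutive ones `φ` follows one coordinate of `σ`, so its other coordinate is locally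
constant, hence constant. Since distinct points of `σ` share no coordinate, there is at most one
coincidence, so `φ` at the two ends lies on a common line or on two lines through one point of
`σ`; either way `f k` cannot be close to the identity at both ends of the segment.
-/

open Set Filter Topology

def crossOpen {X Y : Type*} [TopologicalSpace X] [TopologicalSpace Y] (A : Set (X × Y)) : Prop :=
  ∀ p ∈ A, ∃ U ∈ nhds p.1, ∃ V ∈ nhds p.2, ({p.1} ×ˢ V) ∪ (U ×ˢ {p.2}) ⊆ A

def crossTopology (X Y : Type*) [TopologicalSpace X] [TopologicalSpace Y] :
    TopologicalSpace (X × Y) where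
  IsOpen := crossOpen
  isOpen_univ := fun p _ => ⟨Set.univ, Filter.univ_mem, Set.univ, Filter.univ_mem, Set.subset_univ _⟩
  isOpen_inter := by
    rintro A B hA hB p hp
    obtain ⟨U1, hU1, V1, hV1, h1⟩ := hA p hp.1
    obtain ⟨U2, hU2, V2, hV2, h2⟩ := hB p hp.2
    refine ⟨U1 ∩ U2, Filter.inter_mem hU1 hU2, V1 ∩ V2, Filter.inter_mem hV1 hV2, ?_⟩
    rintro q (hq | hq)
    · exact ⟨h1 (Or.inl ⟨hq.1, hq.2.1⟩), h2 (Or.inl ⟨hq.1, hq.2.2⟩)⟩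
    · exact ⟨h1 (Or.inr ⟨hq.1.1, hq.2⟩), h2 (Or.inr ⟨hq.1.2, hq.2⟩)⟩
  isOpen_sUnion := by
    rintro S hS p hp
    obtain ⟨A, hAS, hpA⟩ := hp
    obtain ⟨U, hU, V, hV, h⟩ := hS A hAS p hpA
    exact ⟨U, hU, V, hV, h.trans (Set.subset_sUnion_of_mem hAS)⟩

def crossSet {X Y : Type*} (E : Set (X × Y)) : Set (X × Y) :=
  {q | ∃ p ∈ E, q.1 = p.1 ∨ q.2 = p.2}


section CrossSet

variable {X Y : Type*}

@[simp]
lemma mem_crossSet_singleton {p q : X × Y} : q ∈ crossSet {p} ↔ q.1 = p.1 ∨ q.2 = p.2 := by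
  simp [crossSet]

lemma mem_crossSet_singleton_comm {p q : X × Y} : q ∈ crossSet {p} ↔ p ∈ crossSet {q} := by
  simp only [mem_crossSet_singleton, eq_comm]

lemma mem_crossSet_singleton_self (p : X × Y) : p ∈ crossSet {p} := by
  simp

end CrossSet

section CrossTopology

variable {X Y : Type*} [TopologicalSpace X] [TopologicalSpace Y]

lemma exists_cross_subset_of_mem_nhds {A : Set (X × Y)} {p : X × Y} (hA : A ∈ 𝓝 p) :
    ∃ U ∈ 𝓝 p.1, ∃ V ∈ 𝓝 p.2, {p.1} ×ˢ V ∪ U ×ˢ {p.2} ⊆ A := by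
  obtain ⟨U, hU, V, hV, hUV⟩ := mem_nhds_prod_iff.mp hA
  refine ⟨U, hU, V, hV, union_subset ?_ ?_⟩
  · exact (prod_mono (singleton_subset_iff.mpr (mem_of_mem_nhds hU)) le_rfl).trans hUV
  · exact (prod_mono le_rfl (singleton_subset_iff.mpr (mem_of_mem_nhds hV))).trans hUV

lemma crossTopology_le_prod : crossTopology X Y ≤ instTopologicalSpaceProd :=
  fun _ hA _ hp => exists_cross_subset_of_mem_nhds (hA.mem_nhds hp)

/-- The lines through `w` miss `T`, and away from `w` the product topology already suffices. -/
lemma isOpen_crossTopology_compl {T : Set (X × Y)} {w : X × Y} (hT : IsClosed (insert w T))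
    (hTw : Disjoint T (crossSet {w})) : IsOpen[crossTopology X Y] Tᶜ := by
  intro p hp
  by_cases hpw : p = w
  · subst hpw
    refine ⟨univ, univ_mem, univ, univ_mem, fun q hq hqT => hTw.notMem_of_mem_left hqT ?_⟩
    rcases hq with ⟨hq, -⟩ | ⟨-, hq⟩
    · exact mem_crossSet_singleton.mpr (Or.inl hq)
    · exact mem_crossSet_singleton.mpr (Or.inr hq)
  · have hp' : p ∈ (insert w T)ᶜ := fun h => h.elim hpw hp
    obtain ⟨U, hU, V, hV, h⟩ := exists_cross_subset_of_mem_nhds (hT.isOpen_compl.mem_nhds hp')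
    exact ⟨U, hU, V, hV, h.trans (compl_subset_compl.mpr (subset_insert w T))⟩

variable [T2Space X] [T2Space Y]

/-- Otherwise a sequence avoiding the cross of `w` and converging to `w` would have a
complement that is a cross-neighbourhood of `w`. -/
lemma eventually_mem_crossSet_of_tendsto {ι : Type*} {l : Filter ι} [l.IsCountablyGenerated]
    {u : ι → X × Y} {w : X × Y} (hu : Tendsto u l (@nhds _ (crossTopology X Y) w)) :
    ∀ᶠ i in l, u i ∈ crossSet {w} := by
  by_contra h
  obtain ⟨ns, hns, hoff⟩ := exists_seq_forall_of_frequently (not_eventually.mp h)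
  have hlim : Tendsto (u ∘ ns) atTop (@nhds _ (crossTopology X Y) w) := hu.comp hns
  have hdisj : Disjoint (range (u ∘ ns)) (crossSet {w}) := by
    rw [disjoint_left]
    rintro _ ⟨k, rfl⟩
    exact hoff k
  have hopen := isOpen_crossTopology_compl
    (hlim.mono_right (_root_.nhds_mono crossTopology_le_prod)).isCompact_insert_range.isClosed hdisj
  have hw : w ∉ range (u ∘ ns) := fun hw => hdisj.notMem_of_mem_left hw
    (mem_crossSet_singleton_self w)
  obtain ⟨k, hk⟩ := Eventually.exists (f := atTop)
    (hlim (@IsOpen.mem_nhds _ (crossTopology X Y) _ _ hopen hw))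
  exact hk ⟨k, rfl⟩

lemma eventually_mem_crossSet_of_continuous {Z : Type*} [TopologicalSpace Z]
    [FirstCountableTopology Z] {g : Z → X × Y} (hg : Continuous[_, crossTopology X Y] g)
    (z : Z) : ∀ᶠ z' in 𝓝 z, g z' ∈ crossSet {g z} :=
  eventually_mem_crossSet_of_tendsto (@Continuous.tendsto _ _ _ (crossTopology X Y) g hg z)

lemma isClosed_setOf_mem_crossSet {Z : Type*} [TopologicalSpace Z] {g h : Z → X × Y}
    (hg : Continuous g) (hh : Continuous h) : IsClosed {z | g z ∈ crossSet {h z}} := by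
  simp only [mem_crossSet_singleton, ofPred_or]
  exact (isClosed_eq hg.fst hh.fst).union (isClosed_eq hg.snd hh.snd)

lemma exists_nonempty_interior_forall_ge_mem_crossSet [BaireSpace (X × Y)] [Nonempty (X × Y)]
    {f : ℕ → X × Y → X × Y} (hf : ∀ k, Continuous (f k))
    (hfl : ∀ p, ∀ᶠ k in atTop, f k p ∈ crossSet {p}) :
    ∃ K, (interior {p | ∀ k ≥ K, f k p ∈ crossSet {p}}).Nonempty := by
  refine nonempty_interior_of_iUnion_of_closed (fun K => ?_) (eq_univ_of_forall fun p => ?_)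
  · simp only [ofPred_forall]
    exact isClosed_biInter fun k _ => isClosed_setOf_mem_crossSet (hf k) continuous_id
  · exact mem_iUnion.mpr (eventually_atTop.mp (hfl p))

end CrossTopology

section Path

variable {X Y : Type*} [TopologicalSpace X] [TopologicalSpace Y] [T2Space X] [T2Space Y]

lemma eqOn_fst_or_eqOn_snd_of_isPreconnected {α : Type*} [TopologicalSpace α] {φ σ : α → X × Y}
    (hφ : Continuous φ) (hσ : Continuous σ) {s : Set α}
    (hs : IsPreconnected s) (hcross : ∀ t ∈ s, φ t ∈ crossSet {σ t})
    (hne : ∀ t ∈ s, φ t ≠ σ t) :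
    EqOn (fun t => (φ t).1) (fun t => (σ t).1) s ∨
      EqOn (fun t => (φ t).2) (fun t => (σ t).2) s := by
  refine isPreconnected_iff_subset_of_disjoint_closed.mp hs _ _ (isClosed_eq hφ.fst hσ.fst)
    (isClosed_eq hφ.snd hσ.snd) (fun t ht => mem_crossSet_singleton.mp (hcross t ht)) ?_
  exact eq_empty_of_forall_notMem fun t ⟨ht, h₁, h₂⟩ => hne t ht (Prod.ext h₁ h₂)

section FirstCountable

variable {α : Type*} [TopologicalSpace α] [FirstCountableTopology α] {φ : α → X × Y}

lemma snd_eq_of_injOn_fst (hφ : Continuous[_, crossTopology X Y] φ) {s : Set α}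
    (hs : IsPreconnected s) (hinj : InjOn (fun t => (φ t).1) s) {t u : α} (ht : t ∈ s)
    (hu : u ∈ s) : (φ t).2 = (φ u).2 := by
  refine hs.induction₂ (fun t u => (φ t).2 = (φ u).2) (fun t ht => ?_)
    (fun _ _ _ _ _ _ => Eq.trans) (fun _ _ _ _ => Eq.symm) ht hu
  filter_upwards [nhdsWithin_le_nhds (eventually_mem_crossSet_of_continuous hφ t),
    self_mem_nhdsWithin] with u hu hus
  rcases mem_crossSet_singleton.mp hu with h | h
  · rw [hinj hus ht h]
  · exact h.symm

lemma fst_eq_of_injOn_snd (hφ : Continuous[_, crossTopology X Y] φ) {s : Set α}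
    (hs : IsPreconnected s) (hinj : InjOn (fun t => (φ t).2) s) {t u : α} (ht : t ∈ s)
    (hu : u ∈ s) : (φ t).1 = (φ u).1 := by
  refine hs.induction₂ (fun t u => (φ t).1 = (φ u).1) (fun t ht => ?_)
    (fun _ _ _ _ _ _ => Eq.trans) (fun _ _ _ _ => Eq.symm) ht hu
  filter_upwards [nhdsWithin_le_nhds (eventually_mem_crossSet_of_continuous hφ t),
    self_mem_nhdsWithin] with u hu hus
  rcases mem_crossSet_singleton.mp hu with h | h
  · exact h.symm
  · rw [hinj hus ht h]

lemma eventually_imp_eq_of_apply_eq (hφ : Continuous[_, crossTopology X Y] φ) {σ : α → X × Y}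
    (hσ : ∀ s t, σ t ∈ crossSet {σ s} → t = s) {t₀ : α} (h₀ : φ t₀ = σ t₀) :
    ∀ᶠ t in 𝓝 t₀, φ t = σ t → t = t₀ := by
  filter_upwards [eventually_mem_crossSet_of_continuous hφ t₀] with t ht heq
  rw [heq, h₀] at ht
  exact hσ t₀ t ht

end FirstCountable

variable {φ σ : ℝ → X × Y}

lemma mem_crossSet_of_forall_ne (hφ : Continuous[_, crossTopology X Y] φ) (hσ : Continuous σ)
    (hσ' : ∀ s t, σ t ∈ crossSet {σ s} → t = s) {a b : ℝ} (hab : a < b)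
    (hcross : ∀ t ∈ Ioo a b, φ t ∈ crossSet {σ t}) (hne : ∀ t ∈ Ioo a b, φ t ≠ σ t) :
    φ b ∈ crossSet {φ a} := by
  have hφ' : Continuous φ := continuous_le_rng crossTopology_le_prod hφ
  have hm : (a + b) / 2 ∈ Ioo a b := ⟨by linarith, by linarith⟩
  have hIcc : Icc a b ⊆ closure (Ioo a b) := (closure_Ioo hab.ne).ge
  have ha := left_mem_Icc.2 hab.le
  have hb := right_mem_Icc.2 hab.le
  rcases eqOn_fst_or_eqOn_snd_of_isPreconnected hφ' hσ isPreconnected_Ioo hcross hne with h | h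
  · have hinj : InjOn (fun t => (φ t).1) (Ioo a b) := fun t ht u hu htu =>
      hσ' u t (mem_crossSet_singleton.mpr (Or.inl ((h ht).symm.trans (htu.trans (h hu)))))
    have hsnd : Icc a b ⊆ {t | (φ t).2 = (φ ((a + b) / 2)).2} := hIcc.trans <| closure_minimal
      (fun t ht => snd_eq_of_injOn_fst hφ isPreconnected_Ioo hinj ht hm)
      (isClosed_eq hφ'.snd continuous_const)
    exact mem_crossSet_singleton.mpr (Or.inr ((hsnd hb).trans (hsnd ha).symm))
  · have hinj : InjOn (fun t => (φ t).2) (Ioo a b) := fun t ht u hu htu =>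
      hσ' u t (mem_crossSet_singleton.mpr (Or.inr ((h ht).symm.trans (htu.trans (h hu)))))
    have hfst : Icc a b ⊆ {t | (φ t).1 = (φ ((a + b) / 2)).1} := hIcc.trans <| closure_minimal
      (fun t ht => fst_eq_of_injOn_snd hφ isPreconnected_Ioo hinj ht hm)
      (isClosed_eq hφ'.fst continuous_const)
    exact mem_crossSet_singleton.mpr (Or.inl ((hfst hb).trans (hfst ha).symm))

/-- Between two coincidences of `φ` and `σ` there would be a consecutive pair (coincidences are
isolated), and `φ` joins consecutive ones through a single line, which `σ` forbids. -/
lemma eq_of_apply_eq_of_apply_eq (hφ : Continuous[_, crossTopology X Y] φ) (hσ : Continuous σ)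
    (hσ' : ∀ s t, σ t ∈ crossSet {σ s} → t = s) {z₁ z₂ : ℝ} (hle : z₁ ≤ z₂)
    (hcross : ∀ t ∈ Ioo z₁ z₂, φ t ∈ crossSet {σ t}) (h₁ : φ z₁ = σ z₁) (h₂ : φ z₂ = σ z₂) :
    z₁ = z₂ := by
  by_contra hne
  have hlt := hle.lt_of_ne hne
  set S := {t ∈ Ioc z₁ z₂ | φ t = σ t}
  have hSne : S.Nonempty := ⟨z₂, ⟨hlt, le_rfl⟩, h₂⟩
  have hSbdd : BddBelow S := ⟨z₁, fun t ht => ht.1.1.le⟩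
  have hzS := csInf_mem_closure hSne hSbdd
  have hclS : closure S ⊆ Icc z₁ z₂ ∩ {t | φ t = σ t} :=
    closure_minimal (fun t ht => ⟨Ioc_subset_Icc_self ht.1, ht.2⟩)
      (isClosed_Icc.inter (isClosed_eq (continuous_le_rng crossTopology_le_prod hφ) hσ))
  obtain ⟨⟨hz₁z, hzz₂⟩, hz⟩ := hclS hzS
  have hz₁ : z₁ < sInf S := by
    refine hz₁z.lt_of_ne fun heq => ?_
    rw [← heq, mem_closure_iff_frequently] at hzS
    obtain ⟨t, ht, htS⟩ := ((eventually_imp_eq_of_apply_eq hφ hσ' h₁).and_frequently hzS).exists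
    exact htS.1.1.ne' (ht htS.2)
  have hbetween : ∀ t ∈ Ioo z₁ (sInf S), φ t ≠ σ t := fun t ht heq =>
    (csInf_le hSbdd ⟨⟨ht.1, ht.2.le.trans hzz₂⟩, heq⟩).not_gt ht.2
  have h := mem_crossSet_of_forall_ne hφ hσ hσ' hz₁
    (fun t ht => hcross t ⟨ht.1, ht.2.trans_le hzz₂⟩) hbetween
  rw [h₁, hz] at h
  exact hz₁.ne (hσ' _ _ h).symm

lemma mem_crossSet_or_exists_mem_crossSet (hφ : Continuous[_, crossTopology X Y] φ)
    (hσ : Continuous σ) (hσ' : ∀ s t, σ t ∈ crossSet {σ s} → t = s) {a b : ℝ} (hab : a ≤ b)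
    (hcross : ∀ t ∈ Ioo a b, φ t ∈ crossSet {σ t}) :
    φ b ∈ crossSet {φ a} ∨ ∃ z ∈ Ioo a b, σ z ∈ crossSet {φ a} ∧ σ z ∈ crossSet {φ b} := by
  by_cases hz : ∃ z ∈ Ioo a b, φ z = σ z
  · obtain ⟨z, hz, hφz⟩ := hz
    refine Or.inr ⟨z, hz, ?_, ?_⟩
    · rw [← hφz]
      refine mem_crossSet_of_forall_ne hφ hσ hσ' hz.1
        (fun t ht => hcross t ⟨ht.1, ht.2.trans hz.2⟩) fun t ht h => ht.2.ne ?_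
      exact eq_of_apply_eq_of_apply_eq hφ hσ hσ' ht.2.le
        (fun s hs => hcross s ⟨ht.1.trans hs.1, hs.2.trans hz.2⟩) h hφz
    · rw [← hφz, mem_crossSet_singleton_comm]
      refine mem_crossSet_of_forall_ne hφ hσ hσ' hz.2
        (fun t ht => hcross t ⟨hz.1.trans ht.1, ht.2⟩) fun t ht h => ht.1.ne ?_
      exact eq_of_apply_eq_of_apply_eq hφ hσ hσ' ht.1.le
        (fun s hs => hcross s ⟨hz.1.trans hs.1, hs.2.trans ht.2⟩) hφz h
  · rcases hab.eq_or_lt with rfl | hlt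
    · exact Or.inl (mem_crossSet_singleton_self _)
    · exact Or.inl (mem_crossSet_of_forall_ne hφ hσ hσ' hlt hcross fun t ht h => hz ⟨t, ht, h⟩)

end Path

section Normed

variable {E F : Type*} [NormedAddCommGroup E] [NormedSpace ℝ E] [NormedAddCommGroup F]
  [NormedSpace ℝ F]

lemma dist_add_smul_add_smul {G : Type*} [SeminormedAddCommGroup G] [NormedSpace ℝ G] (x : G)
    {e : G} (he : ‖e‖ = 1) (t u : ℝ) : dist (x + t • e) (x + u • e) = |t - u| := by
  rw [dist_add_left, dist_eq_norm, ← sub_smul, norm_smul, he, mul_one, Real.norm_eq_abs]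

lemma abs_sub_le_of_mem_crossSet (x : E × F) {e₁ : E} {e₂ : F} (he₁ : ‖e₁‖ = 1) (he₂ : ‖e₂‖ = 1)
    {p q : E × F} (hpq : q ∈ crossSet {p}) (t u : ℝ) :
    |t - u| ≤ dist (x + t • (e₁, e₂)) p + dist q (x + u • (e₁, e₂)) := by
  rcases mem_crossSet_singleton.mp hpq with h | h
  · calc |t - u| = dist (x.1 + t • e₁) (x.1 + u • e₁) := (dist_add_smul_add_smul _ he₁ t u).symm
      _ ≤ dist (x.1 + t • e₁) p.1 + dist q.1 (x.1 + u • e₁) := h ▸ dist_triangle _ _ _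
      _ ≤ dist (x + t • (e₁, e₂)) p + dist q (x + u • (e₁, e₂)) := by
        simp only [Prod.dist_eq]
        exact add_le_add (le_max_left _ _) (le_max_left _ _)
  · calc |t - u| = dist (x.2 + t • e₂) (x.2 + u • e₂) := (dist_add_smul_add_smul _ he₂ t u).symm
      _ ≤ dist (x.2 + t • e₂) p.2 + dist q.2 (x.2 + u • e₂) := h ▸ dist_triangle _ _ _
      _ ≤ dist (x + t • (e₁, e₂)) p + dist q (x + u • (e₁, e₂)) := by
        simp only [Prod.dist_eq]
        exact add_le_add (le_max_right _ _) (le_max_right _ _)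

lemma sub_le_dist_add_dist_of_mem_crossSet (x : E × F) {e₁ : E} {e₂ : F} (he₁ : ‖e₁‖ = 1)
    (he₂ : ‖e₂‖ = 1) {φ : ℝ → E × F} (hφ : Continuous[_, crossTopology E F] φ) {a b : ℝ}
    (hab : a ≤ b) (hcross : ∀ t ∈ Ioo a b, φ t ∈ crossSet {x + t • (e₁, e₂)}) :
    b - a ≤ dist (φ a) (x + a • (e₁, e₂)) + dist (φ b) (x + b • (e₁, e₂)) := by
  set σ : ℝ → E × F := fun t => x + t • (e₁, e₂)
  have hσ : Continuous σ := by fun_prop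
  have hσ' : ∀ s t, σ t ∈ crossSet {σ s} → t = s := fun s t h => by
    have : |s - t| ≤ dist (σ s) (σ s) + dist (σ t) (σ t) :=
      abs_sub_le_of_mem_crossSet x he₁ he₂ h s t
    rw [dist_self, dist_self, add_zero, abs_nonpos_iff, sub_eq_zero] at this
    exact this.symm
  rcases mem_crossSet_or_exists_mem_crossSet hφ hσ hσ' hab hcross with h | ⟨z, -, hza, hzb⟩
  · have : |a - b| ≤ dist (σ a) (φ a) + dist (φ b) (σ b) :=
      abs_sub_le_of_mem_crossSet x he₁ he₂ h a b
    rw [dist_comm] at this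
    linarith [neg_abs_le (a - b)]
  · have ha : |a - z| ≤ dist (σ a) (φ a) + dist (σ z) (σ z) :=
      abs_sub_le_of_mem_crossSet x he₁ he₂ hza a z
    have hb : |b - z| ≤ dist (σ b) (φ b) + dist (σ z) (σ z) :=
      abs_sub_le_of_mem_crossSet x he₁ he₂ hzb b z
    rw [dist_comm, dist_self] at ha hb
    linarith [neg_abs_le (a - z), le_abs_self (b - z)]

theorem not_exists_tendsto_crossTopology_of_continuous [CompleteSpace E] [CompleteSpace F]
    [Nontrivial E] [Nontrivial F] :
    ¬ ∃ f : ℕ → E × F → E × F, (∀ k, Continuous[_, crossTopology E F] (f k)) ∧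
      ∀ p, Tendsto (fun k => f k p) atTop (@nhds _ (crossTopology E F) p) := by
  rintro ⟨f, hfc, hfl⟩
  obtain ⟨K, x, hx⟩ := exists_nonempty_interior_forall_ge_mem_crossSet
    (fun k => continuous_le_rng crossTopology_le_prod (hfc k))
    (fun p => eventually_mem_crossSet_of_tendsto (hfl p))
  obtain ⟨r, hr, hball⟩ := Metric.mem_nhds_iff.mp (mem_interior_iff_mem_nhds.mp hx)
  obtain ⟨e₁, he₁⟩ := exists_norm_eq E zero_le_one
  obtain ⟨e₂, he₂⟩ := exists_norm_eq F zero_le_one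
  have he : ‖((e₁, e₂) : E × F)‖ = 1 := by simp [Prod.norm_def, he₁, he₂]
  set σ : ℝ → E × F := fun t => x + t • (e₁, e₂)
  have hσ_mem (t : ℝ) (ht : t ∈ Ioo 0 (r / 2)) : σ t ∈ Metric.ball x r := by
    have h := dist_add_smul_add_smul x he t 0
    rw [zero_smul, add_zero, sub_zero, abs_of_pos ht.1] at h
    rw [Metric.mem_ball, h]
    linarith [ht.2]
  have hlim (p : E × F) : Tendsto (fun k => f k p) atTop (𝓝 p) :=
    (hfl p).mono_right (_root_.nhds_mono crossTopology_le_prod)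
  obtain ⟨k, hkK, h₀, hr₂⟩ : ∃ k ≥ K, dist (f k (σ 0)) (σ 0) < r / 4 ∧
      dist (f k (σ (r / 2))) (σ (r / 2)) < r / 4 :=
    ((eventually_ge_atTop K).and (((hlim _).eventually (Metric.ball_mem_nhds _ (by positivity))).and
      ((hlim _).eventually (Metric.ball_mem_nhds _ (by positivity))))).exists
  have : r / 2 - 0 ≤ dist (f k (σ 0)) (σ 0) + dist (f k (σ (r / 2))) (σ (r / 2)) :=
    sub_le_dist_add_dist_of_mem_crossSet x he₁ he₂
      (@Continuous.comp _ _ _ _ _ (crossTopology E F) _ _ (hfc k) (by fun_prop : Continuous σ))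
      (by positivity) fun t ht => hball (hσ_mem t ht) k hkK
  linarith

end Normed

theorem identity_not_baire_one_euclidean (n m : ℕ) (hn : 1 ≤ n) (hm : 1 ≤ m) :
    ¬ ∃ f : ℕ → (Fin n → ℝ) × (Fin m → ℝ) → (Fin n → ℝ) × (Fin m → ℝ),
      (∀ k, Continuous[instTopologicalSpaceProd,
        crossTopology (Fin n → ℝ) (Fin m → ℝ)] (f k)) ∧
      ∀ p : (Fin n → ℝ) × (Fin m → ℝ),
        Filter.Tendsto (fun k => f k p) Filter.atTop
          (@nhds ((Fin n → ℝ) × (Fin m → ℝ))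
            (crossTopology (Fin n → ℝ) (Fin m → ℝ)) p) := by
  have : Nonempty (Fin n) := ⟨⟨0, hn⟩⟩
  have : Nonempty (Fin m) := ⟨⟨0, hm⟩⟩
  exact not_exists_tendsto_crossTopology_of_continuous
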